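/- arXiv:2404.16628 — 2 statements merged into one kernel-verified Lean document; each statement's English description precedes it below -/
import Mathlib

section
/- Let G be a group with a fixed finite generating set and associated word metric d_G, and let P and Q be subgroups of G. If Hdist_G(P, Q) < ∞, then comm_G(P) = comm_G(Q). -/
open scoped Pointwise ENNReal NNReal

namespace CIC

variable {G : Type*} [Group G] {H : Type*} [Group H]

/-- Word length of `g` with respect to the generating set `S`: the least `n` such that `g`
is a product of `n` elements of `S ∪ S⁻¹`. -/
noncomputable def wordLength (S : Set G) (g : G) : ℕ :=
  sInf {n | ∃ l : List G, (∀ x ∈ l, x ∈ S ∨ x⁻¹ ∈ S) ∧ l.length = n ∧ l.prod = g}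

/-- The word metric on `G` associated to the generating set `S`. -/
noncomputable def wdist (S : Set G) (g h : G) : ℕ := wordLength S (g⁻¹ * h)

/-- Closed `r`-neighborhood of `A` with respect to the word metric of `S`. -/
def nbhd (S : Set G) (r : ℝ) (A : Set G) : Set G :=
  {x | ∃ a ∈ A, (wdist S a x : ℝ) ≤ r}

/-- Hausdorff distance between subsets of `G`, valued in `[0,∞]`: the infimum of those
`r ≥ 0` such that each set is contained in the closed `r`-neighborhood of the other,
the infimum of the empty set being `∞`. -/
noncomputable def hdist (S : Set G) (A B : Set G) : ℝ≥0∞ :=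
  ⨅ (r : ℝ≥0) (_ : A ⊆ nbhd S (r : ℝ) B ∧ B ⊆ nbhd S (r : ℝ) A), (r : ℝ≥0∞)

/-- The conjugate subgroup `g P g⁻¹`. -/
def conj (g : G) (P : Subgroup G) : Subgroup G := P.map (MulAut.conj g).toMonoidHom

/-- The set `G/𝒫` of all left cosets `gP` with `g ∈ G` and `P ∈ 𝒫`. -/
def cosets (Ps : Finset (Subgroup G)) : Set (Set G) :=
  {A | ∃ (g : G) (P : Subgroup G), P ∈ Ps ∧ A = g • (P : Set G)}

/-- A group pair `(G, 𝒫)`: `S` is a finite generating set of `G` and `𝒫` is a finite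
collection of infinite subgroups of `G`. -/
structure IsGroupPair (S : Finset G) (Ps : Finset (Subgroup G)) : Prop where
  generates : Subgroup.closure (S : Set G) = ⊤
  infinite : ∀ P ∈ Ps, (P : Set G).Infinite

/-- An `(L,C,M)`-quasi-isometry of group pairs `q : (G,𝒫) → (H,𝒬)`. -/
structure IsPairQI (S : Finset G) (T : Finset H)
    (Ps : Finset (Subgroup G)) (Qs : Finset (Subgroup H))
    (L C M : ℝ≥0) (q : G → H) : Prop where
  one_le : 1 ≤ L
  lower : ∀ a b : G, (wdist (S : Set G) a b : ℝ) / L - C ≤ (wdist (T : Set H) (q a) (q b) : ℝ)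
  upper : ∀ a b : G, (wdist (T : Set H) (q a) (q b) : ℝ) ≤ L * (wdist (S : Set G) a b : ℝ) + C
  dense : ∀ y : H, ∃ x : G, (wdist (T : Set H) (q x) y : ℝ) ≤ C
  coset_fwd : ∀ A ∈ cosets Ps, ∃ B ∈ cosets Qs, hdist (T : Set H) (q '' A) B < (M : ℝ≥0∞)
  coset_bwd : ∀ B ∈ cosets Qs, ∃ A ∈ cosets Ps, hdist (T : Set H) (q '' A) B < (M : ℝ≥0∞)

/-! If every point of `P` lies within distance `r` of `Q`, then `P ⊆ Q · B_r` for the ball `B_r`,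
which is finite because `S` is a finite generating set; hence `P` meets only finitely many cosets
of `Q`. By symmetry `P` and `Q` are commensurable, and commensurable subgroups have the same
commensurator. -/

lemma list_prod_mem_pow {M : Type*} [Monoid M] {K : Set M} {l : List M} (h : ∀ x ∈ l, x ∈ K) :
    l.prod ∈ K ^ l.length := by
  induction l with
  | nil => simp
  | cons x l ih =>
    rw [List.prod_cons, List.length_cons, pow_succ']
    exact Set.mul_mem_mul (h x List.mem_cons_self) (ih fun y hy ↦ h y (List.mem_cons_of_mem x hy))

lemma exists_list_of_wordLength {S : Set G} (hS : Subgroup.closure S = ⊤) (g : G) :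
    ∃ l : List G, (∀ x ∈ l, x ∈ S ∨ x⁻¹ ∈ S) ∧ l.length = wordLength S g ∧ l.prod = g := by
  have hg : g ∈ Submonoid.closure (S ∪ S⁻¹) := by
    rw [← Subgroup.closure_toSubmonoid, hS]; trivial
  obtain ⟨l, hl, rfl⟩ := Submonoid.exists_list_of_mem_closure hg
  exact Nat.sInf_mem (s := {n | ∃ l' : List G, (∀ x ∈ l', x ∈ S ∨ x⁻¹ ∈ S) ∧ l'.length = n ∧
    l'.prod = l.prod}) ⟨l.length, l, hl, rfl, rfl⟩

lemma mem_pow_of_wordLength_le {S : Set G} (hS : Subgroup.closure S = ⊤) {g : G} {n : ℕ}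
    (h : wordLength S g ≤ n) : g ∈ (S ∪ S⁻¹ ∪ 1) ^ n := by
  obtain ⟨l, hl, hlen, rfl⟩ := exists_list_of_wordLength hS g
  have hprod : l.prod ∈ (S ∪ S⁻¹ ∪ 1) ^ l.length :=
    list_prod_mem_pow fun x hx ↦ Or.inl ((hl x hx).imp id Set.mem_inv.mpr)
  exact Set.pow_subset_pow_right (by simp) (hlen ▸ h) hprod

lemma finite_setOf_wordLength_le {S : Set G} (hS : Subgroup.closure S = ⊤) (hfin : S.Finite)
    (n : ℕ) : {g | wordLength S g ≤ n}.Finite := by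
  classical
  have hK : (S ∪ S⁻¹ ∪ 1).Finite := (hfin.union hfin.inv).union Set.finite_one
  refine Set.Finite.subset ?_ fun g hg ↦ mem_pow_of_wordLength_le hS hg
  rw [← hK.coe_toFinset, ← Finset.coe_pow]
  exact Finset.finite_toSet _

lemma nbhd_eq_mul (S : Set G) (r : ℝ) (A : Set G) :
    nbhd S r A = A * {g | (wordLength S g : ℝ) ≤ r} := by
  ext x
  refine ⟨fun ⟨a, ha, hax⟩ ↦ ⟨a, ha, a⁻¹ * x, hax, mul_inv_cancel_left a x⟩, ?_⟩
  rintro ⟨a, ha, g, hg, rfl⟩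
  exact ⟨a, ha, by simpa [wdist] using hg⟩

lemma relIndex_ne_zero_of_subset_mul {P Q : Subgroup G} {B : Set G} (hB : B.Finite)
    (hPQB : (P : Set G) ⊆ Q * B) : Q.relIndex P ≠ 0 := by
  have hstab : MulAction.stabilizer P ((1 : G) : G ⧸ Q) = Q.subgroupOf P := by
    ext p
    change (((p : G) * 1 : G) : G ⧸ Q) = ((1 : G) : G ⧸ Q) ↔ _
    rw [mul_one, QuotientGroup.eq, mul_one, inv_mem_iff, Subgroup.mem_subgroupOf]
  -- `p⁻¹ = q b` puts `p` in the left coset `b⁻¹ Q`.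
  have horbit : MulAction.orbit P ((1 : G) : G ⧸ Q) ⊆ (fun b ↦ ((b⁻¹ : G) : G ⧸ Q)) '' B := by
    rintro _ ⟨p, rfl⟩
    obtain ⟨q, hq, b, hb, hqb⟩ := hPQB (P.inv_mem p.2)
    have hbp : b * p = q⁻¹ := by rw [← inv_mul_eq_iff_eq_mul.mpr hqb.symm]; group
    refine ⟨b, hb, ?_⟩
    change ((b⁻¹ : G) : G ⧸ Q) = (((p : G) * 1 : G) : G ⧸ Q)
    rw [QuotientGroup.eq, inv_inv, mul_one, hbp]
    exact Q.inv_mem hq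
  rw [Subgroup.relIndex, ← hstab, MulAction.index_stabilizer]
  exact ((Set.ncard_pos ((hB.image _).subset horbit)).mpr ⟨_, MulAction.mem_orbit_self _⟩).ne'

lemma relIndex_ne_zero_of_subset_nbhd {S : Set G} (hS : Subgroup.closure S = ⊤)
    (hfin : S.Finite) {P Q : Subgroup G} {r : ℝ} (h : (P : Set G) ⊆ nbhd S r Q) :
    Q.relIndex P ≠ 0 := by
  refine relIndex_ne_zero_of_subset_mul (finite_setOf_wordLength_le hS hfin ⌈r⌉₊) ?_
  rw [nbhd_eq_mul] at h
  exact h.trans (Set.mul_subset_mul_left fun g hg ↦ Nat.cast_le.mp (hg.trans (Nat.le_ceil r)))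

lemma exists_subset_nbhd_of_hdist_lt_top {S A B : Set G} (h : hdist S A B < ⊤) :
    ∃ r : ℝ≥0, A ⊆ nbhd S r B ∧ B ⊆ nbhd S r A := by
  obtain ⟨r, hr⟩ := iInf_lt_iff.mp h
  obtain ⟨hAB, -⟩ := iInf_lt_iff.mp hr
  exact ⟨r, hAB⟩

lemma commensurable_of_hdist_lt_top {S : Set G} (hS : Subgroup.closure S = ⊤) (hfin : S.Finite)
    {P Q : Subgroup G} (h : hdist S P Q < ⊤) : Subgroup.Commensurable P Q := by
  obtain ⟨r, hPQ, hQP⟩ := exists_subset_nbhd_of_hdist_lt_top h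
  exact ⟨relIndex_ne_zero_of_subset_nbhd hS hfin hQP, relIndex_ne_zero_of_subset_nbhd hS hfin hPQ⟩

/-- If two subgroups are at finite Hausdorff distance, they have the same commensurator. -/
theorem statement1 (S : Finset G) (hS : Subgroup.closure (S : Set G) = ⊤)
    (P Q : Subgroup G) (h : hdist (S : Set G) (P : Set G) (Q : Set G) < ⊤) :
    Subgroup.Commensurable.commensurator P = Subgroup.Commensurable.commensurator Q :=
  Subgroup.Commensurable.eq (commensurable_of_hdist_lt_top hS S.finite_toSet h)

end CIC
end

section
/- A group pair (G,𝒫) is reduced (meaning P = comm_G(P) for every P ∈ 𝒫 and no two distinct subgroups in 𝒫 are conjugate in G) if and only if for all left cosets A, B ∈ G/𝒫 the Hausdorff distance Hdist_G(A,B) is either 0 or ∞; equivalently, Hdist_G(A,B) < ∞ implies A = B. -/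
/-!
Left translations are isometries of the word metric and a right translation by `k` moves every
point by at most `|k|`, so `g • P` lies at finite Hausdorff distance from the conjugate `gPg⁻¹`.
For subgroups, `P ⊆ N_r(Q)` means `P ⊆ Q * B_r`; as word balls are finite, this is the same as
`P` being covered by finitely many cosets of `Q`, i.e. `[P : P ∩ Q] < ∞`. Hence `gP` and `hQ` are
at finite Hausdorff distance iff `(h⁻¹g) P (h⁻¹g)⁻¹` and `Q` are commensurable, and both conditions
of reducedness say precisely that such cosets coincide.
-/

open scoped Pointwise ENNReal NNReal

namespace CIC

variable {G : Type*} [Group G] {H : Type*} [Group H]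

/-- A group pair `(G,𝒫)` is reduced: `P = comm_G(P)` for every `P ∈ 𝒫` and no two distinct
subgroups of `𝒫` are conjugate in `G`. -/
def IsReduced (Ps : Finset (Subgroup G)) : Prop :=
  (∀ P ∈ Ps, Subgroup.Commensurable.commensurator P = P) ∧
  (∀ P ∈ Ps, ∀ Q ∈ Ps, (∃ g : G, conj g P = Q) → P = Q)

section WordLength

variable {S : Set G}

lemma wordLength_prod_le_length {l : List G} (hl : ∀ x ∈ l, x ∈ S ∨ x⁻¹ ∈ S) :
    wordLength S l.prod ≤ l.length :=
  Nat.sInf_le ⟨l, hl, rfl, rfl⟩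

lemma exists_word_length_eq_wordLength (hS : Subgroup.closure S = ⊤) (g : G) :
    ∃ l : List G, (∀ x ∈ l, x ∈ S ∨ x⁻¹ ∈ S) ∧ l.length = wordLength S g ∧ l.prod = g := by
  have hg : g ∈ Submonoid.closure (S ∪ S⁻¹) := by
    rw [← Subgroup.closure_toSubmonoid, hS]
    exact Subgroup.mem_top g
  obtain ⟨l, hl, hprod⟩ := Submonoid.exists_list_of_mem_closure hg
  exact Nat.sInf_mem
    (s := {n | ∃ l : List G, (∀ x ∈ l, x ∈ S ∨ x⁻¹ ∈ S) ∧ l.length = n ∧ l.prod = g})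
    ⟨l.length, l, hl, rfl, hprod⟩

lemma wordLength_mul_le (hS : Subgroup.closure S = ⊤) (g h : G) :
    wordLength S (g * h) ≤ wordLength S g + wordLength S h := by
  obtain ⟨l₁, hl₁, hlen₁, rfl⟩ := exists_word_length_eq_wordLength hS g
  obtain ⟨l₂, hl₂, hlen₂, rfl⟩ := exists_word_length_eq_wordLength hS h
  rw [← hlen₁, ← hlen₂, ← List.prod_append, ← List.length_append]
  exact wordLength_prod_le_length fun x hx => (List.mem_append.mp hx).elim (hl₁ x) (hl₂ x)

def wordBall (S : Set G) (r : ℝ) : Set G := {g | (wordLength S g : ℝ) ≤ r}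

lemma wordBall_mul_wordBall_subset (hS : Subgroup.closure S = ⊤) (r s : ℝ) :
    wordBall S r * wordBall S s ⊆ wordBall S (r + s) := by
  rintro _ ⟨g, hg, h, hh, rfl⟩
  have := wordLength_mul_le hS g h
  simp only [wordBall, Set.mem_ofPred_eq] at hg hh ⊢
  push_cast [← Nat.cast_le (α := ℝ)] at this
  linarith

lemma finite_wordBall (hS₀ : S.Finite) (hS : Subgroup.closure S = ⊤) (r : ℝ) :
    (wordBall S r).Finite := by
  have : Finite ↥(S ∪ S⁻¹) := (hS₀.union hS₀.inv).to_subtype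
  refine ((List.finite_length_le ↥(S ∪ S⁻¹) ⌊r⌋₊).image
    fun l => (l.map Subtype.val).prod).subset fun g hg => ?_
  obtain ⟨l, hl, hlen, rfl⟩ := exists_word_length_eq_wordLength hS g
  lift l to List ↥(S ∪ S⁻¹) using hl
  have hfloor : wordLength S (l.map Subtype.val).prod ≤ ⌊r⌋₊ := Nat.le_floor hg
  rw [← hlen, List.length_map] at hfloor
  exact ⟨l, hfloor, rfl⟩

end WordLength

lemma relIndex_ne_zero_iff_exists_finite_subset_mul_coe {P Q : Subgroup G} :
    Q.relIndex P ≠ 0 ↔ ∃ F : Set G, F.Finite ∧ (P : Set G) ⊆ F * Q := by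
  constructor
  · intro h
    have : (Q.subgroupOf P).FiniteIndex := ⟨h⟩
    have : Finite (P ⧸ Q.subgroupOf P) := Subgroup.finite_quotient_of_finiteIndex
    refine ⟨Set.range fun c : P ⧸ Q.subgroupOf P => ((c.out : P) : G), Set.finite_range _, ?_⟩
    intro p hp
    obtain ⟨q, hq⟩ := QuotientGroup.mk_out_eq_mul (Q.subgroupOf P) ⟨p, hp⟩
    refine Set.mem_mul.mpr ⟨_, ⟨QuotientGroup.mk ⟨p, hp⟩, rfl⟩, ((q : P) : G)⁻¹,
      inv_mem (Subgroup.mem_subgroupOf.mp q.2), ?_⟩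
    simp only [hq, Subgroup.coe_mul, mul_inv_cancel_right]
  · rintro ⟨F, hF, hPF⟩
    let f : P ⧸ Q.subgroupOf P → G ⧸ Q := fun c => ((c.out : P) : G)
    have hinj : f.Injective := by
      intro c₁ c₂ h
      rw [← c₁.out_eq', ← c₂.out_eq']
      rw [QuotientGroup.eq] at h ⊢
      simpa [Subgroup.mem_subgroupOf] using h
    have hrange : Set.range f ⊆ (↑) '' F := by
      rintro _ ⟨c, rfl⟩
      obtain ⟨a, ha, q, hq, hmul⟩ := Set.mem_mul.mp (hPF (c.out : P).2)
      exact ⟨a, ha, by simpa [f, ← hmul, QuotientGroup.eq] using hq⟩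
    have : Finite (Set.range f) := ((hF.image _).subset hrange).to_subtype
    have : Finite (P ⧸ Q.subgroupOf P) := Finite.of_injective_finite_range hinj
    exact Subgroup.index_ne_zero_of_finite

lemma relIndex_ne_zero_iff_exists_finite_subset_coe_mul {P Q : Subgroup G} :
    Q.relIndex P ≠ 0 ↔ ∃ F : Set G, F.Finite ∧ (P : Set G) ⊆ Q * F := by
  rw [relIndex_ne_zero_iff_exists_finite_subset_mul_coe]
  have key (F : Set G) : (P : Set G) ⊆ F * Q ↔ (P : Set G) ⊆ Q * F⁻¹ := by
    rw [← Set.inv_subset_inv, mul_inv_rev, inv_coe_set, inv_coe_set]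
  exact ⟨fun ⟨F, hF, h⟩ => ⟨F⁻¹, hF.inv, (key F).mp h⟩,
    fun ⟨F, hF, h⟩ => ⟨F⁻¹, hF.inv, (key F⁻¹).mpr (by rwa [inv_inv])⟩⟩

section Hausdorff

variable {S : Set G}

lemma nbhd_eq_mul_wordBall (r : ℝ) (A : Set G) : nbhd S r A = A * wordBall S r := by
  ext x
  constructor
  · rintro ⟨a, ha, hax⟩
    exact ⟨a, ha, a⁻¹ * x, hax, mul_inv_cancel_left a x⟩
  · rintro ⟨a, ha, b, hb, rfl⟩
    exact ⟨a, ha, by simpa [wdist, wordBall] using hb⟩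

lemma nbhd_mono {A B : Set G} {r s : ℝ} (hAB : A ⊆ B) (hrs : r ≤ s) :
    nbhd S r A ⊆ nbhd S s B := by
  rintro x ⟨a, ha, hax⟩
  exact ⟨a, hAB ha, hax.trans hrs⟩

lemma nbhd_nbhd_subset (hS : Subgroup.closure S = ⊤) (r s : ℝ) (A : Set G) :
    nbhd S s (nbhd S r A) ⊆ nbhd S (r + s) A := by
  simp only [nbhd_eq_mul_wordBall, mul_assoc]
  exact Set.mul_subset_mul_left (wordBall_mul_wordBall_subset hS r s)

lemma smul_nbhd (g : G) (r : ℝ) (A : Set G) : g • nbhd S r A = nbhd S r (g • A) := by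
  simp only [nbhd_eq_mul_wordBall, smul_mul_assoc]

def FiniteHdist (S : Set G) (A B : Set G) : Prop :=
  ∃ r : ℝ≥0, A ⊆ nbhd S r B ∧ B ⊆ nbhd S r A

lemma hdist_lt_top_iff {A B : Set G} : hdist S A B < ⊤ ↔ FiniteHdist S A B := by
  simp [hdist, iInf_lt_top, FiniteHdist]

lemma FiniteHdist.symm {A B : Set G} (h : FiniteHdist S A B) : FiniteHdist S B A :=
  let ⟨r, hAB, hBA⟩ := h
  ⟨r, hBA, hAB⟩

lemma FiniteHdist.trans (hS : Subgroup.closure S = ⊤) {A B C : Set G}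
    (hAB : FiniteHdist S A B) (hBC : FiniteHdist S B C) : FiniteHdist S A C := by
  obtain ⟨r, hAB, hBA⟩ := hAB
  obtain ⟨s, hBC, hCB⟩ := hBC
  refine ⟨r + s, ?_, ?_⟩
  · calc A ⊆ nbhd S r (nbhd S s C) := hAB.trans (nbhd_mono hBC le_rfl)
      _ ⊆ nbhd S (r + s) C := by
        rw [add_comm]
        exact nbhd_nbhd_subset hS _ _ _
  · calc C ⊆ nbhd S s (nbhd S r A) := hCB.trans (nbhd_mono hBA le_rfl)
      _ ⊆ nbhd S (r + s) A := nbhd_nbhd_subset hS _ _ _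

lemma FiniteHdist.smul {A B : Set G} (g : G) (h : FiniteHdist S A B) :
    FiniteHdist S (g • A) (g • B) :=
  let ⟨r, hAB, hBA⟩ := h
  ⟨r, smul_nbhd g r B ▸ Set.smul_set_mono hAB, smul_nbhd g r A ▸ Set.smul_set_mono hBA⟩

lemma finiteHdist_op_smul (g : G) (A : Set G) : FiniteHdist S A (MulOpposite.op g • A) := by
  refine ⟨wordLength S g + wordLength S g⁻¹, fun a ha => ?_, ?_⟩
  · refine ⟨a * g, Set.smul_mem_smul_set ha, ?_⟩
    simp [wdist]
  · rintro _ ⟨a, ha, rfl⟩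
    refine ⟨a, ha, ?_⟩
    simp [wdist]

end Hausdorff

section Commensurable

open Subgroup.Commensurable

variable {S : Set G}

lemma relIndex_ne_zero_iff_exists_subset_nbhd (hS₀ : S.Finite) (hS : Subgroup.closure S = ⊤)
    {P Q : Subgroup G} : Q.relIndex P ≠ 0 ↔ ∃ r : ℝ≥0, (P : Set G) ⊆ nbhd S r Q := by
  simp only [relIndex_ne_zero_iff_exists_finite_subset_coe_mul, nbhd_eq_mul_wordBall]
  constructor
  · rintro ⟨F, hF, hPF⟩
    obtain ⟨n, hn⟩ := (hF.image (wordLength S)).bddAbove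
    refine ⟨n, hPF.trans (Set.mul_subset_mul_left fun f hf => ?_)⟩
    show (wordLength S f : ℝ) ≤ ((n : ℝ≥0) : ℝ)
    exact_mod_cast hn (Set.mem_image_of_mem _ hf)
  · rintro ⟨r, hr⟩
    exact ⟨wordBall S r, finite_wordBall hS₀ hS r, hr⟩

lemma commensurable_iff_finiteHdist (hS₀ : S.Finite) (hS : Subgroup.closure S = ⊤)
    {P Q : Subgroup G} : P.Commensurable Q ↔ FiniteHdist S P Q := by
  simp only [Subgroup.Commensurable, relIndex_ne_zero_iff_exists_subset_nbhd hS₀ hS]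
  constructor
  · rintro ⟨⟨r, hQP⟩, ⟨s, hPQ⟩⟩
    exact ⟨max r s, hPQ.trans (nbhd_mono subset_rfl (by simp)),
      hQP.trans (nbhd_mono subset_rfl (by simp))⟩
  · rintro ⟨r, hPQ, hQP⟩
    exact ⟨⟨r, hQP⟩, ⟨r, hPQ⟩⟩

lemma conj_eq_toConjAct_smul (g : G) (P : Subgroup G) : conj g P = ConjAct.toConjAct g • P := rfl

lemma coe_conj (g : G) (P : Subgroup G) :
    (conj g P : Set G) = MulOpposite.op g⁻¹ • g • (P : Set G) := by
  ext x
  simp only [conj, Subgroup.coe_map, MulEquiv.coe_toMonoidHom, MulAut.conj_apply,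
    Set.mem_image, SetLike.mem_coe, Set.mem_smul_set_iff_inv_smul_mem, smul_eq_mul,
    MulOpposite.smul_eq_mul_unop, MulOpposite.unop_inv, MulOpposite.unop_op, inv_inv]
  constructor
  · rintro ⟨p, hp, rfl⟩
    simpa [mul_assoc] using hp
  · intro h
    exact ⟨_, h, by group⟩

lemma finiteHdist_smul_conj (g : G) (P : Subgroup G) :
    FiniteHdist S (g • (P : Set G)) (conj g P) := by
  rw [coe_conj]
  exact finiteHdist_op_smul _ _

lemma commensurator_smul (g : ConjAct G) (P : Subgroup G) :
    commensurator (g • P) = g • commensurator P := by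
  ext x
  rw [Subgroup.mem_pointwise_smul_iff_inv_smul_mem, commensurator_mem_iff, commensurator_mem_iff,
    commensurable_conj g⁻¹, inv_smul_smul, smul_smul, smul_smul]
  congr! 2
  obtain ⟨g, rfl⟩ := ConjAct.toConjAct.surjective g
  simp [ConjAct.smul_def]

lemma le_commensurator (P : Subgroup G) : P ≤ commensurator P := fun g hg => by
  rw [commensurator_mem_iff, Subgroup.conjAct_pointwise_smul_eq_self (Subgroup.le_normalizer hg)]

end Commensurable

section Cosets

variable {S : Set G}

lemma finiteHdist_smul_iff_commensurable (hS₀ : S.Finite) (hS : Subgroup.closure S = ⊤)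
    (g : G) (P Q : Subgroup G) :
    FiniteHdist S (g • (P : Set G)) Q ↔ (conj g P).Commensurable Q := by
  rw [commensurable_iff_finiteHdist hS₀ hS]
  exact ⟨(finiteHdist_smul_conj g P).symm.trans hS, (finiteHdist_smul_conj g P).trans hS⟩

lemma mem_of_smul_coe_eq {g : G} {P Q : Subgroup G} (h : g • (P : Set G) = Q) : g ∈ P := by
  have : (1 : G) ∈ g • (P : Set G) := h ▸ Q.one_mem
  simpa [Set.mem_smul_set_iff_inv_smul_mem] using this

lemma eq_of_smul_coe_eq {g : G} {P Q : Subgroup G} (h : g • (P : Set G) = Q) : P = Q :=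
  SetLike.coe_injective (smul_coe_set (mem_of_smul_coe_eq h) ▸ h)

lemma IsReduced.smul_coe_eq_of_finiteHdist {Ps : Finset (Subgroup G)} (hred : IsReduced Ps)
    (hS₀ : S.Finite) (hS : Subgroup.closure S = ⊤) {P Q : Subgroup G} (hP : P ∈ Ps) (hQ : Q ∈ Ps)
    {g h : G} (hgh : FiniteHdist S (g • (P : Set G)) (h • (Q : Set G))) :
    g • (P : Set G) = h • (Q : Set G) := by
  obtain ⟨hcomm, hconj⟩ := hred
  have hk : (conj (h⁻¹ * g) P).Commensurable Q := by
    rw [← finiteHdist_smul_iff_commensurable hS₀ hS, mul_smul]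
    simpa using hgh.smul h⁻¹
  have hkP : conj (h⁻¹ * g) P = Q := by
    have := hk.eq
    rwa [conj_eq_toConjAct_smul, commensurator_smul, hcomm P hP, hcomm Q hQ] at this
  obtain rfl : P = Q := hconj P hP Q hQ ⟨_, hkP⟩
  have hkmem : h⁻¹ * g ∈ P := by
    rw [← hcomm P hP]
    exact hk
  rw [leftCoset_eq_iff]
  simpa using inv_mem hkmem

lemma isReduced_of_forall_finiteHdist_imp_eq {Ps : Finset (Subgroup G)}
    (hS₀ : S.Finite) (hS : Subgroup.closure S = ⊤)
    (hco : ∀ A ∈ cosets Ps, ∀ B ∈ cosets Ps, FiniteHdist S A B → A = B) : IsReduced Ps := by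
  have hsmul : ∀ P ∈ Ps, ∀ Q ∈ Ps, ∀ g : G, (conj g P).Commensurable Q → g • (P : Set G) = Q :=
    fun P hP Q hQ g hPQ => by
      simpa using hco _ ⟨g, P, hP, rfl⟩ _ ⟨1, Q, hQ, (one_smul _ _).symm⟩
        ((finiteHdist_smul_iff_commensurable hS₀ hS g P Q).mpr hPQ)
  refine ⟨fun P hP => le_antisymm (fun g hg => ?_) (le_commensurator P), ?_⟩
  · exact mem_of_smul_coe_eq (hsmul P hP P hP g hg)
  · rintro P hP Q hQ ⟨g, rfl⟩
    exact eq_of_smul_coe_eq (hsmul P hP _ hQ g (Subgroup.Commensurable.refl _))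

end Cosets

/-- A group pair is reduced iff the Hausdorff distance between left cosets only takes the
values `0` and `∞`; equivalently, finite Hausdorff distance between cosets implies equality. -/
theorem statement2 (S : Finset G) (Ps : Finset (Subgroup G)) (hpair : IsGroupPair S Ps) :
    IsReduced Ps ↔
      ∀ A ∈ cosets Ps, ∀ B ∈ cosets Ps, hdist (S : Set G) A B < ⊤ → A = B := by
  have hS₀ : (S : Set G).Finite := S.finite_toSet
  constructor
  · rintro hred _ ⟨g, P, hP, rfl⟩ _ ⟨h, Q, hQ, rfl⟩ hfin
    exact hred.smul_coe_eq_of_finiteHdist hS₀ hpair.generates hP hQ (hdist_lt_top_iff.mp hfin)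
  · exact fun hco => isReduced_of_forall_finiteHdist_imp_eq hS₀ hpair.generates
      fun A hA B hB hAB => hco A hA B hB (hdist_lt_top_iff.mpr hAB)

end CIC
end
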